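/- Let w be a word over {a,b}. Then wa, wb, aw, bw are all Sturmian if and only if w = (uxy)^n u for some central word u, distinct letters x,y with {x,y} = {a,b}, and a nonnegative integer n. Furthermore, awa, awb, bwa, bwb are all Sturmian if and only if w is central (i.e., n = 0), whereas for n > 0 exactly one of the four bilateral extensions awa, awb, bwa, bwb is not Sturmian, namely xwy. -/
import Mathlib


/-- The two-letter alphabet {a, b}. -/
inductive AB : Type
  | a : AB
  | b : AB
deriving DecidableEq, Repr

/-- A (finite) word over {a, b}. -/
abbrev Word := List AB

open AB

/-- `u` occurs in `w` at position `i`. -/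
def OccursAt (u w : Word) (i : ℕ) : Prop :=
  i + u.length ≤ w.length ∧ (w.drop i).take u.length = u

/-- `u` occurs exactly once in `w` (is unrepeated in `w`). -/
def OccursOnce (u w : Word) : Prop := ∃! i, OccursAt u w i

/-- `u` is a right special factor of `w`: both `ua` and `ub` are factors of `w`. -/
def IsRightSpecial (u w : Word) : Prop := (u ++ [a]) <:+: w ∧ (u ++ [b]) <:+: w

/-- `u` is a left special factor of `w`: both `au` and `bu` are factors of `w`. -/
def IsLeftSpecial (u w : Word) : Prop := ([a] ++ u) <:+: w ∧ ([b] ++ u) <:+: w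

/-- `K w`: the length of the shortest unrepeated suffix of `w`. -/
noncomputable def Kp (w : Word) : ℕ := sInf {n | ∃ s : Word, s <:+ w ∧ s.length = n ∧ OccursOnce s w}

/-- `H w`: the length of the shortest unrepeated prefix of `w`. -/
noncomputable def Hp (w : Word) : ℕ := sInf {n | ∃ p : Word, p <+: w ∧ p.length = n ∧ OccursOnce p w}

/-- `R w`: the smallest `n ≥ 0` such that `w` has no right special factor of length `n`. -/
noncomputable def Rp (w : Word) : ℕ := sInf {n | ∀ u : Word, u.length = n → ¬ IsRightSpecial u w}

/-- `L w`: the smallest `n ≥ 0` such that `w` has no left special factor of length `n`. -/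
noncomputable def Lp (w : Word) : ℕ := sInf {n | ∀ u : Word, u.length = n → ¬ IsLeftSpecial u w}

/-- A word `w` is trapezoidal if `|w| = K w + R w`. -/
def IsTrapezoidal (w : Word) : Prop := w.length = Kp w + Rp w

/-- A finite word over `{a,b}` is Sturmian iff it is balanced: there is no word `u`
with both `aua` and `bub` factors of `w`. -/
def IsSturmian (w : Word) : Prop :=
  ¬ ∃ u : Word, ([a] ++ u ++ [a]) <:+: w ∧ ([b] ++ u ++ [b]) <:+: w

/-- A nonempty word is closed if it has a border (a proper prefix which is also a suffix)
whose only occurrences in `w` are as a prefix and as a suffix. -/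
def IsClosedWord (w : Word) : Prop :=
  w ≠ [] ∧ ∃ v : Word, v <+: w ∧ v.length < w.length ∧ v <:+ w ∧
    ∀ i : ℕ, OccursAt v w i → i = 0 ∨ i + v.length = w.length

/-- A nonempty word is open if it is not closed. -/
def IsOpenWord (w : Word) : Prop := w ≠ [] ∧ ¬ IsClosedWord w

/-- Central words: `a^n`, `b^n`, or `u a b v = v b a u`. -/
def IsCentral (w : Word) : Prop :=
  (∃ n : ℕ, w = List.replicate n a) ∨ (∃ n : ℕ, w = List.replicate n b) ∨
  (∃ u v : Word, w = u ++ [a, b] ++ v ∧ w = v ++ [b, a] ++ u)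

/-- The minimal period of `w`: `|w|` minus the length of the longest border of `w`. -/
noncomputable def minPeriod (w : Word) : ℕ :=
  w.length - sSup {n | ∃ v : Word, v.length = n ∧ v <+: w ∧ v ≠ w ∧ v <:+ w}

open AB List

namespace Stu

/-- letter swap -/
def sw : AB → AB
  | a => b
  | b => a

@[simp] lemma sw_sw (c : AB) : sw (sw c) = c := by cases c <;> rfl
@[simp] lemma sw_a : sw a = b := rfl
@[simp] lemma sw_b : sw b = a := rfl
@[simp] lemma sw_comp : sw ∘ sw = id := funext sw_sw

def swW (w : Word) : Word := w.map sw

@[simp] lemma swW_swW (w : Word) : swW (swW w) = w := by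
  simp [swW, List.map_map]

@[simp] lemma swW_append (u v : Word) : swW (u ++ v) = swW u ++ swW v := by
  simp [swW]

@[simp] lemma swW_cons (c : AB) (w : Word) : swW (c :: w) = sw c :: swW w := rfl

@[simp] lemma swW_nil : swW [] = [] := rfl

lemma bal_infix {w t : Word} (h : IsSturmian w) (ht : t <:+: w) : IsSturmian t := by
  intro ⟨u, h1, h2⟩
  exact h ⟨u, h1.trans ht, h2.trans ht⟩

lemma infix_swW {u w : Word} (h : u <:+: w) : swW u <:+: swW w := by
  obtain ⟨s, t, rfl⟩ := h
  exact ⟨swW s, swW t, by simp [swW]⟩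

lemma bal_swW {w : Word} (h : IsSturmian w) : IsSturmian (swW w) := by
  intro ⟨u, h1, h2⟩
  apply h
  refine ⟨swW u, ?_, ?_⟩
  · have := infix_swW h2
    simpa [swW] using this
  · have := infix_swW h1
    simpa [swW] using this

lemma bal_swW_iff {w : Word} : IsSturmian (swW w) ↔ IsSturmian w :=
  ⟨fun h => by simpa using bal_swW h, bal_swW⟩

lemma infix_reverse {u w : Word} (h : u <:+: w) : u.reverse <:+: w.reverse := by
  obtain ⟨s, t, rfl⟩ := h
  exact ⟨t.reverse, s.reverse, by simp⟩

lemma bal_reverse {w : Word} (h : IsSturmian w) : IsSturmian w.reverse := by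
  intro ⟨u, h1, h2⟩
  apply h
  refine ⟨u.reverse, ?_, ?_⟩
  · have := infix_reverse h1
    simpa using this
  · have := infix_reverse h2
    simpa using this

lemma bal_reverse_iff {w : Word} : IsSturmian w.reverse ↔ IsSturmian w :=
  ⟨fun h => by simpa using bal_reverse h, bal_reverse⟩

/-- the morphism x ↦ x, y ↦ xy  (for x = a : a ↦ a, b ↦ ab) -/
def bl : AB → Word
  | a => [a]
  | b => [a, b]

def L (s : Word) : Word := s.flatMap bl

@[simp] lemma L_nil : L [] = [] := rfl
@[simp] lemma L_cons (c : AB) (s : Word) : L (c :: s) = bl c ++ L s := rfl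
@[simp] lemma L_append (s t : Word) : L (s ++ t) = L s ++ L t := by
  simp [L]

lemma infix_L {u w : Word} (h : u <:+: w) : L u <:+: L w := by
  obtain ⟨s, t, rfl⟩ := h
  exact ⟨L s, L t, by simp⟩

lemma L_ne_nil {s : Word} (h : s ≠ []) : L s ≠ [] := by
  cases s with
  | nil => simp at h
  | cons c t => cases c <;> simp [L, bl]

lemma L_head {s : Word} (h : s ≠ []) : ∃ t, L s = a :: t := by
  cases s with
  | nil => simp at h
  | cons c t => cases c <;> exact ⟨_, rfl⟩

end Stu

namespace Stu

/-- power of a word -/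
def P (n : ℕ) (s : Word) : Word := (List.replicate n s).flatten

@[simp] lemma P_zero (s : Word) : P 0 s = [] := rfl
@[simp] lemma P_succ (n : ℕ) (s : Word) : P (n+1) s = s ++ P n s := by
  simp [P, List.replicate_succ]

lemma P_succ' (n : ℕ) (s : Word) : P (n+1) s = P n s ++ s := by
  induction n with
  | zero => simp
  | succ n ih =>
    calc P (n+1+1) s = s ++ P (n+1) s := P_succ _ _
    _ = s ++ (P n s ++ s) := by rw [ih]
    _ = (s ++ P n s) ++ s := by simp
    _ = P (n+1) s ++ s := by rw [P_succ]

lemma L_P (n : ℕ) (s : Word) : L (P n s) = P n (L s) := by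
  induction n with
  | zero => rfl
  | succ n ih => simp [ih]

lemma swW_P (n : ℕ) (s : Word) : swW (P n s) = P n (swW s) := by
  induction n with
  | zero => rfl
  | succ n ih => simp [ih]

lemma reverse_P (n : ℕ) (s : Word) : (P n s).reverse = P n s.reverse := by
  induction n with
  | zero => rfl
  | succ n ih => rw [P_succ, List.reverse_append, ih, P_succ']

/-- rotation identity -/
lemma P_rot (n : ℕ) (s t : Word) : s ++ P n (t ++ s) = P n (s ++ t) ++ s := by
  induction n with
  | zero => simp
  | succ n ih =>
    rw [P_succ, P_succ]
    calc s ++ ((t ++ s) ++ P n (t ++ s)) = (s ++ t) ++ (s ++ P n (t ++ s)) := by simp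
    _ = (s ++ t) ++ (P n (s ++ t) ++ s) := by rw [ih]
    _ = _ := by simp

/-- reversal morphism: a ↦ a, b ↦ ba -/
def rbl : AB → Word
  | a => [a]
  | b => [b, a]

def R (s : Word) : Word := s.flatMap rbl

@[simp] lemma R_nil : R [] = [] := rfl
@[simp] lemma R_cons (c : AB) (s : Word) : R (c :: s) = rbl c ++ R s := rfl
@[simp] lemma R_append (s t : Word) : R (s ++ t) = R s ++ R t := by simp [R]

lemma reverse_L (s : Word) : (L s).reverse = R s.reverse := by
  induction s with
  | nil => rfl
  | cons c t ih =>
    rw [L_cons, List.reverse_append, ih]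
    cases c <;> simp [bl, rbl]

lemma aR_eq_La (t : Word) : a :: R t = L t ++ [a] := by
  induction t with
  | nil => rfl
  | cons c t ih =>
    cases c
    · simpa [rbl, bl] using ih
    · simp only [R_cons, rbl, bl, L_cons]
      rw [List.cons_append, List.cons_append, List.append_assoc]
      exact congrArg _ (congrArg _ ih)

lemma reverse_La (s : Word) (h : s.reverse = s) : (L s ++ [a]).reverse = L s ++ [a] := by
  rw [List.reverse_append, reverse_L, h]
  simpa using aR_eq_La s

lemma swW_reverse (s : Word) : (swW s).reverse = swW s.reverse := by
  simp [swW, List.map_reverse]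

/-- central words, recursive characterization -/
inductive CentralR : Word → Prop
  | nil : CentralR []
  | exta {v} : CentralR v → CentralR (L v ++ [a])
  | extb {v} : CentralR v → CentralR (swW (L (swW v) ++ [a]))

lemma CentralR.sw {v : Word} (h : CentralR v) : CentralR (swW v) := by
  induction h with
  | nil => exact CentralR.nil
  | @exta v _ _ =>
    have := CentralR.extb (v := swW v) (by assumption)
    simpa using this
  | @extb v _ _ =>
    have := CentralR.exta (v := swW v) (by assumption)
    simpa using this

lemma CentralR.palindrome {v : Word} (h : CentralR v) : v.reverse = v := by
  induction h with
  | nil => rfl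
  | exta _ ih => exact reverse_La _ ih
  | @extb v hv ih =>
    have h1 : (swW v).reverse = swW v := by rw [swW_reverse, ih]
    rw [swW_reverse, reverse_La _ h1]

lemma L_repa (n : ℕ) : L (List.replicate n a) = List.replicate n a := by
  induction n with
  | zero => rfl
  | succ m ihm => simp [List.replicate_succ, bl, ihm]

lemma CentralR.repa (n : ℕ) : CentralR (List.replicate n a) := by
  induction n with
  | zero => exact CentralR.nil
  | succ n ih =>
    have := CentralR.exta ih
    rw [L_repa] at this
    simpa [List.replicate_succ'] using this

lemma CentralR.repb (n : ℕ) : CentralR (List.replicate n b) := by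
  have := (CentralR.repa n).sw
  simpa [swW, List.map_replicate] using this

end Stu

namespace Stu

lemma La_head (s : Word) : ∃ t, L s ++ [a] = a :: t := by
  cases s with
  | nil => exact ⟨[], rfl⟩
  | cons c t => cases c <;> exact ⟨_, rfl⟩

lemma prefix_head {x y : AB} {l₁ l₂ : Word} (h : x :: l₁ <+: y :: l₂) : x = y :=
  (List.cons_prefix_cons.mp h).1

/-- no bb in L s -/
lemma no_bb_L (s : Word) : ¬ ([b, b] <:+: L s) := by
  induction s with
  | nil => intro h; simpa using h.length_le
  | cons c s' ih =>
    cases c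
    · intro h
      rcases List.infix_cons_iff.mp h with h | h
      · exact absurd (prefix_head h) (by simp)
      · exact ih h
    · intro h
      rcases List.infix_cons_iff.mp h with h | h
      · exact absurd (prefix_head h) (by simp)
      · rcases List.infix_cons_iff.mp h with h | h
        · have h2 := (List.cons_prefix_cons.mp h).2
          rcases La_head s' with ⟨t, ht⟩
          rcases s' with _ | ⟨c', s''⟩
          · simpa using h2
          · have : ([b] : Word) <+: L (c' :: s'') := h2
            cases c' <;> exact absurd (prefix_head this) (by simp)
        · exact ih h

/-- infix of w ++ [c] : either infix of w, or ends with c -/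
lemma infix_append_singleton {t w : Word} {c : AB} (h : t <:+: w ++ [c]) :
    t <:+: w ∨ ∃ t', t = t' ++ [c] ∧ t' <:+ w := by
  obtain ⟨l, r, hl⟩ := h
  rcases List.eq_nil_or_concat r with rfl | ⟨r', d, rfl⟩
  · rcases List.eq_nil_or_concat t with rfl | ⟨t', d, rfl⟩
    · left; exact List.nil_infix
    · simp only [List.append_nil] at hl
      rw [List.concat_eq_append, ← List.append_assoc] at hl
      have h1 : l ++ t' = w ∧ d = c := by
        constructor
        · have := congrArg (fun x => x.dropLast) hl
          simpa using this
        · have := congrArg (fun x => x.getLast?) hl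
          simpa using this
      right
      refine ⟨t', ?_, ⟨l, h1.1⟩⟩
      rw [List.concat_eq_append, h1.2]
  · left
    rw [List.concat_eq_append] at hl
    have : (l ++ t ++ r') ++ [d] = w ++ [c] := by
      rw [← hl]; simp
    have h1 : l ++ t ++ r' = w := by
      have := congrArg (fun x => x.dropLast) this
      simpa using this
    exact ⟨l, r', h1⟩

lemma infix_of_not_last {t w : Word} {c : AB} (h : t <:+: w ++ [c])
    (h2 : ∀ t', t ≠ t' ++ [c]) : t <:+: w := by
  rcases infix_append_singleton h with h | ⟨t', ht', _⟩
  · exact h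
  · exact absurd ht' (h2 t')

end Stu

namespace Stu

lemma no_bb_La (s : Word) : ¬ ([b, b] <:+: L s ++ [a]) := by
  intro h
  rcases infix_append_singleton h with h | ⟨t', ht', _⟩
  · exact no_bb_L s h
  · have := congrArg List.getLast? ht'
    simp at this

end Stu

namespace Stu

lemma infix_cons' {t w : Word} {c : AB} (h : t <:+: w) : t <:+: c :: w := by
  obtain ⟨l, r, rfl⟩ := h
  exact ⟨c :: l, r, rfl⟩

lemma LX_head (u₂ r : Word) : ∃ t, L u₂ ++ (a :: r) = a :: t := by
  cases u₂ with
  | nil => exact ⟨r, rfl⟩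
  | cons c t => cases c <;> exact ⟨_, rfl⟩

lemma desub_pref : ∀ (s t : Word), (t ++ [b]) <+: L s → ∃ u₁, t = L u₁ ++ [a] ∧ (u₁ ++ [b]) <+: s := by
  intro s
  induction s with
  | nil =>
    intro t h
    have := h.length_le
    simp at this
  | cons c s' ih =>
    intro t h
    cases c
    · -- L s = a :: L s'
      cases t with
      | nil => exact absurd (prefix_head h) (by simp)
      | cons d t' =>
        obtain ⟨hd, h2⟩ := List.cons_prefix_cons.mp h
        obtain ⟨u₂, e1, e2⟩ := ih t' h2
        refine ⟨a :: u₂, ?_, ?_⟩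
        · simp [hd, e1, bl]
        · exact List.cons_prefix_cons.mpr ⟨rfl, e2⟩
    · -- L s = a :: b :: L s'
      cases t with
      | nil => exact absurd (prefix_head h) (by simp)
      | cons d t' =>
        obtain ⟨hd, h2⟩ := List.cons_prefix_cons.mp h
        subst hd
        cases t' with
        | nil =>
          refine ⟨[], by simp, ?_⟩
          simpa using List.cons_prefix_cons.mpr ⟨rfl, List.nil_prefix⟩
        | cons e t'' =>
          obtain ⟨he, h3⟩ := List.cons_prefix_cons.mp h2
          subst he
          obtain ⟨u₂, e1, e2⟩ := ih t'' h3
          refine ⟨b :: u₂, ?_, ?_⟩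
          · simp [e1, bl]
          · exact List.cons_prefix_cons.mpr ⟨rfl, e2⟩

lemma desub_infix_b : ∀ (s t : Word), (b :: (t ++ [b])) <:+: L s →
    ∃ u₁, t = L u₁ ++ [a] ∧ (b :: (u₁ ++ [b])) <:+: s := by
  intro s
  induction s with
  | nil =>
    intro t h
    have := h.length_le
    simp at this
  | cons c s' ih =>
    intro t h
    cases c
    · rcases List.infix_cons_iff.mp h with h | h
      · exact absurd (prefix_head h) (by simp)
      · obtain ⟨u₁, e1, e2⟩ := ih t h
        exact ⟨u₁, e1, infix_cons' e2⟩
    · rcases List.infix_cons_iff.mp h with h | h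
      · exact absurd (prefix_head h) (by simp)
      · rcases List.infix_cons_iff.mp h with h | h
        · have h2 := (List.cons_prefix_cons.mp h).2
          obtain ⟨u₁, e1, e2⟩ := desub_pref s' t h2
          exact ⟨u₁, e1, (List.cons_prefix_cons.mpr ⟨rfl, e2⟩).isInfix⟩
        · obtain ⟨u₁, e1, e2⟩ := ih t h
          exact ⟨u₁, e1, infix_cons' e2⟩

lemma pref_a : ∀ (u₁ s : Word), (L u₁ ++ [a, a]) <+: (L s ++ [a]) → (u₁ ++ [a]) <+: s := by
  intro u₁
  induction u₁ with
  | nil =>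
    intro s h
    cases s with
    | nil => have := h.length_le; simp at this
    | cons c s' =>
      cases c
      · exact List.cons_prefix_cons.mpr ⟨rfl, List.nil_prefix⟩
      · have h2 := (List.cons_prefix_cons.mp h).2
        exact absurd (prefix_head h2) (by simp)
  | cons c u₂ ih =>
    intro s h
    cases c
    · -- L (a :: u₂) = a :: L u₂
      cases s with
      | nil =>
        have := h.length_le
        simp [bl] at this
      | cons d s' =>
        cases d
        · have h2 : (L u₂ ++ [a, a]) <+: (L s' ++ [a]) := by simpa [bl] using h
          have := ih s' h2
          exact List.cons_prefix_cons.mpr ⟨rfl, this⟩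
        · have h2 : (L u₂ ++ [a, a]) <+: (b :: (L s' ++ [a])) := by simpa [bl] using h
          obtain ⟨t, ht⟩ := LX_head u₂ [a]
          rw [show (L u₂ ++ [a,a] : Word) = L u₂ ++ (a :: [a]) from rfl, ht] at h2
          exact absurd (prefix_head h2) (by simp)
    · -- L (b :: u₂) = a :: b :: L u₂
      cases s with
      | nil =>
        have := h.length_le
        simp [bl] at this
      | cons d s' =>
        cases d
        · have h2 : (b :: (L u₂ ++ [a, a])) <+: (L s' ++ [a]) := by simpa [bl] using h
          obtain ⟨t, ht⟩ := La_head s'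
          rw [ht] at h2
          exact absurd (prefix_head h2) (by simp)
        · have h2 : (L u₂ ++ [a, a]) <+: (L s' ++ [a]) := by simpa [bl] using h
          have := ih s' h2
          exact List.cons_prefix_cons.mpr ⟨rfl, this⟩

lemma desub_infix_a : ∀ (s u₁ : Word), (a :: (L u₁ ++ [a, a])) <:+: (L s ++ [a]) →
    (a :: (u₁ ++ [a])) <:+: s := by
  intro s
  induction s with
  | nil =>
    intro u₁ h
    have := h.length_le
    simp at this
  | cons c s' ih =>
    intro u₁ h
    cases c
    · rcases List.infix_cons_iff.mp (by simpa [bl] using h) with h | h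
      · have h2 := (List.cons_prefix_cons.mp h).2
        have := pref_a u₁ s' h2
        exact (List.cons_prefix_cons.mpr ⟨rfl, this⟩).isInfix
      · exact infix_cons' (ih u₁ h)
    · rcases List.infix_cons_iff.mp (by simpa [bl] using h) with h | h
      · have h2 := (List.cons_prefix_cons.mp h).2
        obtain ⟨t, ht⟩ := LX_head u₁ [a]
        rw [show L u₁ ++ [a,a] = L u₁ ++ (a :: [a]) by simp, ht] at h2
        exact absurd (prefix_head h2) (by simp)
      · rcases List.infix_cons_iff.mp h with h | h
        · exact absurd (prefix_head h) (by simp)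
        · exact infix_cons' (ih u₁ h)

lemma infix_La {t s : Word} (h : t <:+: s) : (L t ++ [a]) <:+: (L s ++ [a]) := by
  obtain ⟨l, r, rfl⟩ := h
  cases r with
  | nil => exact ⟨L l, [], by simp⟩
  | cons c r' =>
    cases c
    · exact ⟨L l, L r' ++ [a], by simp [bl]⟩
    · exact ⟨L l, b :: L r' ++ [a], by simp [bl]⟩

end Stu

namespace Stu

lemma getLast_ne {x y : AB} (hxy : x = y → False) {u : Word} {t' : Word}
    (h : ([x] ++ u ++ [x] : Word) = t' ++ [y]) : False := by
  have h2 : ((x :: u) ++ [x] : Word) = t' ++ [y] := by simpa using h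
  have h3 := congrArg List.getLast? h2
  rw [List.getLast?_concat, List.getLast?_concat] at h3
  exact hxy (Option.some.inj h3)

/-- T1 forward: balance is preserved by the substitution (with closing a) -/
lemma bal_La {s : Word} (h : IsSturmian s) : IsSturmian (L s ++ [a]) := by
  rintro ⟨u, h1, h2⟩
  -- bub lies in L s
  have h2' : ([b] ++ u ++ [b]) <:+: L s := by
    apply infix_of_not_last h2
    intro t' ht'
    exact getLast_ne (by simp) ht'
  cases u with
  | nil => exact no_bb_La s (by simpa using h2)
  | cons c u' =>
    have h2'' : (b :: ((c :: u') ++ [b])) <:+: L s := by simpa using h2'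
    obtain ⟨u₁, e1, e2⟩ := desub_infix_b s (c :: u') h2''
    have h1' : (a :: (L u₁ ++ [a, a])) <:+: (L s ++ [a]) := by
      have : ([a] ++ (c :: u') ++ [a]) = (a :: (L u₁ ++ [a, a])) := by
        rw [e1]; simp
      rw [← this]
      exact h1
    have := desub_infix_a s u₁ h1'
    exact h ⟨u₁, by simpa using this, by simpa using e2⟩

/-- T1 backward: unbalance is preserved -/
lemma unbal_La {s : Word} (h : ¬ IsSturmian s) : ¬ IsSturmian (L s ++ [a]) := by
  rw [IsSturmian, not_not] at h
  obtain ⟨u, h1, h2⟩ := h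
  intro hbal
  apply hbal
  refine ⟨L u ++ [a], ?_, ?_⟩
  · have := infix_La h1
    have e : L ([a] ++ u ++ [a]) ++ [a] = [a] ++ (L u ++ [a]) ++ [a] := by simp [bl]
    rw [e] at this
    exact this
  · have := infix_L h2
    have e : L ([b] ++ u ++ [b]) = [a] ++ ([b] ++ (L u ++ [a]) ++ [b]) := by simp [bl]
    rw [e] at this
    exact ((List.suffix_append [a] _).isInfix.trans this).trans (List.prefix_append _ _).isInfix

lemma bal_La_iff {s : Word} : IsSturmian (L s ++ [a]) ↔ IsSturmian s := by
  constructor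
  · intro h
    by_contra hs
    exact unbal_La hs h
  · exact bal_La

/-- when s ends in b, no closing a needed for unbalance transfer -/
lemma unbal_L_last_b {s₀ : Word} (h : ¬ IsSturmian (s₀ ++ [b])) : ¬ IsSturmian (L (s₀ ++ [b])) := by
  rw [IsSturmian, not_not] at h
  obtain ⟨u, h1, h2⟩ := h
  intro hbal
  apply hbal
  refine ⟨L u ++ [a], ?_, ?_⟩
  · -- aua is an infix of s₀
    have h1' : ([a] ++ u ++ [a]) <:+: s₀ := by
      apply infix_of_not_last h1
      intro t' ht'
      exact getLast_ne (by simp) ht'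
    have := infix_La h1'
    have e : L ([a] ++ u ++ [a]) ++ [a] = [a] ++ (L u ++ [a]) ++ [a] := by simp [bl]
    rw [e] at this
    refine this.trans ?_
    have : L (s₀ ++ [b]) = (L s₀ ++ [a]) ++ [b] := by simp [bl]
    rw [this]
    exact (List.prefix_append _ _).isInfix
  · have := infix_L h2
    have e : L ([b] ++ u ++ [b]) = [a] ++ ([b] ++ (L u ++ [a]) ++ [b]) := by simp [bl]
    rw [e] at this
    exact ((List.suffix_append [a] _).isInfix).trans this

end Stu

namespace Stu

/-- the master family word -/
def W (v : Word) (x y : AB) (n : ℕ) : Word := P n (v ++ [x, y]) ++ v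

lemma swW_W (v : Word) (x y : AB) (n : ℕ) :
    swW (W v x y n) = W (swW v) (sw x) (sw y) n := by
  simp [W, swW_P]

lemma W_rev {v : Word} (hv : v.reverse = v) (x y : AB) (n : ℕ) :
    (W v x y n).reverse = W v y x n := by
  rw [W, List.reverse_append, reverse_P, List.reverse_append, hv]
  show v ++ P n ([y, x] ++ v) = _
  rw [P_rot, W]

lemma pair_cases {x y : AB} (h : x ≠ y) : (x = a ∧ y = b) ∨ (x = b ∧ y = a) := by
  cases x <;> cases y <;> simp_all

lemma bal_of_count_a {w : Word} (h : w.count a ≤ 1) : IsSturmian w := by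
  rintro ⟨u, h1, h2⟩
  have h3 := h1.sublist.count_le a
  simp [List.count_append] at h3
  omega

lemma L_repb (n : ℕ) : L (List.replicate n b) = P n [a, b] := by
  induction n with
  | zero => rfl
  | succ m ih => simp [List.replicate_succ, bl, ih]

/-- the statement of the balance family theorem for a fixed center v -/
def S (v : Word) : Prop := ∀ x y : AB, x ≠ y → ∀ n : ℕ,
  IsSturmian (x :: (W v x y n) ++ [x]) ∧ IsSturmian (y :: (W v x y n) ++ [y]) ∧
  IsSturmian (y :: (W v x y n) ++ [x])

lemma S_swW {v : Word} (h : S v) : S (swW v) := by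
  intro x y hxy n
  have h2 := h (sw x) (sw y) (by cases x <;> cases y <;> simp_all) n
  have e : ∀ c d : AB, swW (sw c :: (W v (sw x) (sw y) n) ++ [sw d]) =
      c :: (W (swW v) x y n) ++ [sw (sw d)] := by
    intro c d
    simp [swW_W]
  refine ⟨?_, ?_, ?_⟩
  · have := bal_swW h2.1
    rw [e x x] at this; simpa using this
  · have := bal_swW h2.2.1
    rw [e y y] at this; simpa using this
  · have := bal_swW h2.2.2
    rw [e y x] at this; simpa using this

lemma P_comm (n : ℕ) (t : Word) : t ++ P n t = P n t ++ t := by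
  rw [← P_succ, P_succ']

lemma rot_ba (n : ℕ) : [a] ++ P n [b, a] = P n [a, b] ++ [a] := by
  simpa using P_rot n [a] [b]

lemma balYba (n : ℕ) : IsSturmian (a :: (W [] b a n) ++ [a]) := by
  have e : (a :: (W [] b a n) ++ [a] : Word) = L (List.replicate n b ++ [a]) ++ [a] := by
    calc (a :: (W [] b a n) ++ [a] : Word) = ([a] ++ P n [b, a]) ++ [a] := by simp [W]
    _ = (P n [a, b] ++ [a]) ++ [a] := by rw [rot_ba]
    _ = L (List.replicate n b ++ [a]) ++ [a] := by simp [L_repb, bl]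
  rw [e]
  exact bal_La (bal_of_count_a (by simp [List.count_replicate]))

lemma balXab (n : ℕ) : IsSturmian (a :: (W [] a b n) ++ [a]) := by
  have e : (a :: (W [] a b n) ++ [a] : Word) = L ([a] ++ List.replicate n b) ++ [a] := by
    simp [W, L_repb, bl]
  rw [e]
  exact bal_La (bal_of_count_a (by simp [List.count_replicate]))

lemma balRep (m : ℕ) : IsSturmian (L (List.replicate m b) ++ [a]) :=
  bal_La (bal_of_count_a (by simp [List.count_replicate]))

lemma S_nil : S [] := by
  intro x y hxy n
  rcases pair_cases hxy with ⟨rfl, rfl⟩ | ⟨rfl, rfl⟩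
  · refine ⟨balXab n, ?_, ?_⟩
    · -- Y(a,b) = σ (Y(b,a))
      have e : (b :: (W [] a b n) ++ [b] : Word) = swW (a :: (W [] b a n) ++ [a]) := by
        simp [swW_W]
      rw [e]
      exact bal_swW (balYba n)
    · -- Z(a,b) = b (ab)^n a ⊆ (ab)^(n+2)
      have e2 : L (List.replicate (n+2) b) = [a] ++ (b :: (W [] a b n) ++ [a]) ++ [b] := by
        rw [L_repb, show n+2 = n+1+1 from rfl, P_succ, P_succ' n [a, b]]
        simp [W]
      have hb : IsSturmian (L (List.replicate (n+2) b)) :=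
        bal_infix (balRep (n+2)) (List.prefix_append _ _).isInfix
      apply bal_infix hb
      rw [e2]
      exact ⟨[a], [b], rfl⟩
  · refine ⟨?_, balYba n, ?_⟩
    · -- X(b,a) = σ (X(a,b))
      have e : (b :: (W [] b a n) ++ [b] : Word) = swW (a :: (W [] a b n) ++ [a]) := by
        simp [swW_W]
      rw [e]
      exact bal_swW (balXab n)
    · -- Z(b,a) = a (ba)^n b = (ab)^(n+1)
      have e : (a :: (W [] b a n) ++ [b] : Word) = L (List.replicate (n+1) b) := by
        calc (a :: (W [] b a n) ++ [b] : Word) = ([a] ++ P n [b, a]) ++ [b] := by simp [W]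
        _ = (P n [a, b] ++ [a]) ++ [b] := by rw [rot_ba]
        _ = P (n+1) [a, b] := by rw [P_succ' n [a, b]]; simp
        _ = L (List.replicate (n+1) b) := (L_repb (n+1)).symm
      rw [e]
      exact bal_infix (balRep (n+1)) (List.prefix_append _ _).isInfix

end Stu

namespace Stu

lemma stepA {v' : Word} (hpal : v'.reverse = v') (h : S v') : S (L v' ++ [a]) := by
  have hvpal : (L v' ++ [a]).reverse = L v' ++ [a] := reverse_La v' hpal
  have hab : (a : AB) ≠ b := by simp
  have hba : (b : AB) ≠ a := by simp
  have eXab : ∀ n : ℕ, a :: (W (L v' ++ [a]) a b n) ++ [a] =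
      L (a :: (W v' a b n) ++ [a]) ++ [a] := by
    intro n; simp [W, L_P, bl]
  have eYab : ∀ n : ℕ, L (b :: (W v' a b n) ++ [b]) ++ [a] =
      [a] ++ (b :: (W (L v' ++ [a]) a b n) ++ [b]) ++ [a] := by
    intro n; simp [W, L_P, bl]
  have eXba : ∀ n : ℕ, L (b :: (W v' b a n) ++ [b]) ++ [a] =
      [a] ++ (b :: (W (L v' ++ [a]) b a n) ++ [b]) ++ [a] := by
    intro n; simp [W, L_P, bl]
  have eYba : ∀ n : ℕ, a :: (W (L v' ++ [a]) b a n) ++ [a] =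
      L (a :: (W v' b a n) ++ [a]) ++ [a] := by
    intro n; simp [W, L_P, bl]
  have eZba : ∀ n : ℕ, L (a :: (W v' b a n) ++ [b]) ++ [a] =
      (a :: (W (L v' ++ [a]) b a n) ++ [b]) ++ [a] := by
    intro n; simp [W, L_P, bl]
  have hXab : ∀ n, IsSturmian (a :: (W (L v' ++ [a]) a b n) ++ [a]) := by
    intro n; rw [eXab n]; exact bal_La (h a b hab n).1
  have hYab : ∀ n, IsSturmian (b :: (W (L v' ++ [a]) a b n) ++ [b]) := by
    intro n
    have h2 := bal_La (h a b hab n).2.1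
    rw [eYab n] at h2
    exact bal_infix h2 ⟨[a], [a], rfl⟩
  have hXba : ∀ n, IsSturmian (b :: (W (L v' ++ [a]) b a n) ++ [b]) := by
    intro n
    have h2 := bal_La (h b a hba n).1
    rw [eXba n] at h2
    exact bal_infix h2 ⟨[a], [a], rfl⟩
  have hYba : ∀ n, IsSturmian (a :: (W (L v' ++ [a]) b a n) ++ [a]) := by
    intro n; rw [eYba n]; exact bal_La (h b a hba n).2.1
  have hZba : ∀ n, IsSturmian (a :: (W (L v' ++ [a]) b a n) ++ [b]) := by
    intro n
    have h2 := bal_La (h b a hba n).2.2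
    rw [eZba n] at h2
    exact bal_infix h2 ⟨[], [a], rfl⟩
  have hZab : ∀ n, IsSturmian (b :: (W (L v' ++ [a]) a b n) ++ [a]) := by
    intro n
    rw [← bal_reverse_iff]
    have e : (b :: (W (L v' ++ [a]) a b n) ++ [a]).reverse =
        a :: (W (L v' ++ [a]) b a n) ++ [b] := by
      simp [W_rev hvpal]
    rw [e]
    exact hZba n
  intro x y hxy n
  rcases pair_cases hxy with ⟨rfl, rfl⟩ | ⟨rfl, rfl⟩
  · exact ⟨hXab n, hYab n, hZab n⟩
  · exact ⟨hXba n, hYba n, hZba n⟩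

lemma S_of_central {v : Word} (h : CentralR v) : S v := by
  induction h with
  | nil => exact S_nil
  | @exta v' hv' ih => exact stepA hv'.palindrome ih
  | @extb v' hv' ih =>
    have h1 : S (swW v') := S_swW ih
    have h2 : S (L (swW v') ++ [a]) := stepA (hv'.sw).palindrome h1
    exact S_swW h2

end Stu

namespace Stu

lemma length_L (m : Word) : m.length ≤ (L m).length := by
  induction m with
  | nil => simp
  | cons c t ih => cases c <;> simp [bl] <;> omega

lemma exists_desub : ∀ (N : ℕ) (w : Word), w.length ≤ N → (∃ t, w = a :: t) →
    (¬ ([b,b] <:+: w)) → ∃ m, w = L m := by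
  intro N
  induction N with
  | zero =>
    rintro w hl ⟨t, rfl⟩ _
    simp at hl
  | succ N ih =>
    rintro w hl ⟨t, rfl⟩ hbb
    cases t with
    | nil => exact ⟨[a], rfl⟩
    | cons c t' =>
      cases c
      · obtain ⟨m', hm'⟩ := ih (a :: t') (by simpa using Nat.le_of_succ_le_succ hl)
          ⟨t', rfl⟩ (fun h => hbb (infix_cons' h))
        exact ⟨a :: m', by simp [bl, hm']⟩
      · cases t' with
        | nil => exact ⟨[b], rfl⟩
        | cons d t'' =>
          cases d
          · obtain ⟨m', hm'⟩ := ih (a :: t'')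
              (by simp at hl ⊢; omega) ⟨t'', rfl⟩
              (fun h => hbb (infix_cons' (infix_cons' h)))
            exact ⟨b :: m', by simp [bl, hm']⟩
          · exact absurd ⟨[a], t'', rfl⟩ hbb

lemma last_L {m w₀ : Word} (h : L m = w₀ ++ [a]) : ∃ m₀, m = m₀ ++ [a] := by
  rcases List.eq_nil_or_concat m with rfl | ⟨m₀, c, rfl⟩
  · simp at h
  · cases c
    · exact ⟨m₀, by simp⟩
    · exfalso
      rw [List.concat_eq_append] at h
      have h2 : L m₀ ++ [a, b] = w₀ ++ [a] := by simpa [bl] using h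
      have := congrArg List.getLast? h2
      rw [show (L m₀ ++ [a, b] : Word) = (L m₀ ++ [a]) ++ [b] by simp] at this
      rw [List.getLast?_concat, List.getLast?_concat] at this
      simp at this

lemma alt_ab : ∀ (N : ℕ) (w : Word), w.length ≤ N → (¬ [a,a] <:+: w) → (¬ [b,b] <:+: w) →
    (∃ t, w = a :: t) → (∃ w₀, w = w₀ ++ [b]) → ∃ n, w = P n [a, b] := by
  intro N
  induction N with
  | zero =>
    rintro w hl _ _ ⟨t, rfl⟩ _
    simp at hl
  | succ N ih =>
    rintro w hl haa hbb ⟨t, rfl⟩ ⟨w₀, hw₀⟩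
    cases t with
    | nil =>
      exfalso
      rcases List.eq_nil_or_concat w₀ with rfl | ⟨w₁, c, rfl⟩
      · simp at hw₀
      · rw [List.concat_eq_append, List.append_assoc] at hw₀
        rcases w₁ with _ | ⟨e, w₂⟩ <;> simp_all
    | cons c t' =>
      cases c
      · exact absurd ⟨[], t', rfl⟩ haa
      · cases t' with
        | nil => exact ⟨1, rfl⟩
        | cons d t'' =>
          cases d
          · -- w = a :: b :: a :: t''
            have hw : ∃ w₂, (a :: t'' : Word) = w₂ ++ [b] := by
              rcases w₀ with _ | ⟨e, w₁⟩
              · simp at hw₀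
              · rcases w₁ with _ | ⟨f, w₂⟩
                · simp at hw₀
                · refine ⟨w₂, ?_⟩
                  have := hw₀
                  simp at this
                  exact this.2.2
            obtain ⟨n, hn⟩ := ih (a :: t'') (by simp at hl ⊢; omega)
              (fun h => haa (infix_cons' (infix_cons' h)))
              (fun h => hbb (infix_cons' (infix_cons' h))) ⟨t'', rfl⟩ hw
            exact ⟨n + 1, by simp [hn]⟩
          · exact absurd ⟨[a], t'', rfl⟩ hbb

lemma alt_ba_b : ∀ (N : ℕ) (w : Word), w.length ≤ N → (¬ [a,a] <:+: w) → (¬ [b,b] <:+: w) →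
    (∃ t, w = b :: t) → (∃ w₀, w = w₀ ++ [b]) → ∃ n, w = P n [b, a] ++ [b] := by
  intro N
  rintro w hl haa hbb ⟨t, rfl⟩ ⟨w₀, hw₀⟩
  cases t with
  | nil => exact ⟨0, rfl⟩
  | cons c t' =>
    cases c
    · -- b :: a :: t' ; a :: t' starts a and ends b
      have hw : ∃ w₂, (a :: t' : Word) = w₂ ++ [b] := by
        rcases w₀ with _ | ⟨e, w₁⟩
        · simp at hw₀
        · refine ⟨w₁, ?_⟩
          simp at hw₀
          exact hw₀.2
      obtain ⟨n, hn⟩ := alt_ab N (a :: t') (by simp at hl ⊢; omega)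
        (fun h => haa (infix_cons' h)) (fun h => hbb (infix_cons' h)) ⟨t', rfl⟩ hw
      refine ⟨n, ?_⟩
      have e : (b :: (a :: t') : Word) = b :: P n [a,b] := by rw [hn]
      rw [e]
      have : (P n [b,a] ++ [b] : Word) = [b] ++ P n ([a] ++ [b]) := by
        have := P_rot n [b] [a]
        simp at this ⊢
        rw [← this]
      rw [this]
      simp
    · exact absurd ⟨[], t', rfl⟩ hbb

end Stu

namespace Stu

def Good (w : Word) : Prop :=
  IsSturmian (w ++ [a]) ∧ IsSturmian (w ++ [b]) ∧ IsSturmian (a :: w) ∧ IsSturmian (b :: w)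

def Str (w : Word) : Prop :=
  ∃ (u : Word) (x y : AB) (n : ℕ), x ≠ y ∧ CentralR u ∧ w = W u x y n

lemma Str_swW {w : Word} (h : Str (swW w)) : Str w := by
  obtain ⟨u, x, y, n, hxy, hc, e⟩ := h
  refine ⟨swW u, sw x, sw y, n, ?_, hc.sw, ?_⟩
  · intro heq
    apply hxy
    have := congrArg sw heq
    simpa using this
  · have := congrArg swW e
    rw [swW_swW, swW_W] at this
    exact this

lemma derive_am {m₀ : Word} (hbalm : IsSturmian (m₀ ++ [a]))
    (haw : IsSturmian (a :: (L m₀ ++ [a]))) : IsSturmian (a :: m₀) := by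
  rintro ⟨u, h1, h2⟩
  have h2' : ([b] ++ u ++ [b]) <:+: m₀ := by
    rcases List.infix_cons_iff.mp h2 with h | h
    · exact absurd (prefix_head h) (by simp)
    · exact h
  rcases List.infix_cons_iff.mp h1 with h | h
  · have hpre : (u ++ [a]) <+: m₀ := by simpa using h
    obtain ⟨r, hr⟩ := hpre
    apply haw
    refine ⟨L u ++ [a], ?_, ?_⟩
    · obtain ⟨ρ, hρ⟩ := La_head r
      refine ⟨[], ρ, ?_⟩
      rw [← hr]
      simp [bl, hρ]
    · have h3 := infix_L h2'
      have e : L ([b] ++ u ++ [b]) = [a] ++ ([b] ++ (L u ++ [a]) ++ [b]) := by simp [bl]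
      rw [e] at h3
      exact ((List.suffix_append [a] _).isInfix.trans h3).trans ⟨[a], [a], by simp⟩
  · exact (bal_infix hbalm (List.prefix_append _ _).isInfix) ⟨u, h, h2'⟩

end Stu

namespace Stu

lemma derive_bm {m₀ : Word} (hbalm₀ : IsSturmian m₀)
    (hbw : IsSturmian (b :: (L m₀ ++ [a]))) : IsSturmian (b :: m₀) := by
  rintro ⟨u, h1, h2⟩
  have h1' : ([a] ++ u ++ [a]) <:+: m₀ := by
    rcases List.infix_cons_iff.mp h1 with h | h
    · exact absurd (prefix_head h) (by simp)
    · exact h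
  rcases List.infix_cons_iff.mp h2 with h | h
  · have hpre : (u ++ [b]) <+: m₀ := by simpa using h
    obtain ⟨r, hr⟩ := hpre
    apply hbw
    refine ⟨L u ++ [a], ?_, ?_⟩
    · -- aua part, inside L m₀ ++ [a]
      have h3 := infix_La h1'
      have e : L ([a] ++ u ++ [a]) ++ [a] = [a] ++ (L u ++ [a]) ++ [a] := by simp [bl]
      rw [e] at h3
      exact h3.trans (List.suffix_cons b _).isInfix
    · -- bub part : prefix of b :: L m₀ ++ [a]
      refine ⟨[], L r ++ [a], ?_⟩
      rw [← hr]
      simp [bl]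
  · exact hbalm₀ ⟨u, h1', h⟩

lemma lift_W {u' : Word} {x y : AB} (hxy : x ≠ y) (n : ℕ) :
    L (W u' x y n ++ [a]) = W (L u' ++ [a]) x y n := by
  rcases pair_cases hxy with ⟨rfl, rfl⟩ | ⟨rfl, rfl⟩ <;> simp [W, L_P, bl]

lemma str_rep_a (k : ℕ) : Str (List.replicate k a) :=
  ⟨List.replicate k a, a, b, 0, by simp, CentralR.repa k, by simp [W]⟩

lemma str_rep_b (k : ℕ) : Str (List.replicate k b) :=
  ⟨List.replicate k b, a, b, 0, by simp, CentralR.repb k, by simp [W]⟩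

lemma central_bab (n : ℕ) : CentralR (P n [b, a] ++ [b]) := by
  have h1 : CentralR (L (List.replicate n b) ++ [a]) := CentralR.exta (CentralR.repb n)
  have h2 := h1.sw
  rw [L_repb] at h2
  have e : swW (P n [a, b] ++ [a]) = P n [b, a] ++ [b] := by
    simp [swW_P]
  rw [e] at h2
  exact h2

end Stu

namespace Stu

lemma Good_swW {w : Word} (h : Good w) : Good (swW w) := by
  obtain ⟨h1, h2, h3, h4⟩ := h
  refine ⟨?_, ?_, ?_, ?_⟩
  · have := bal_swW h2; simpa using this
  · have := bal_swW h1; simpa using this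
  · have := bal_swW h4; simpa using this
  · have := bal_swW h3; simpa using this

lemma mainCase (N : ℕ) (ih : ∀ w', w'.length ≤ N → Good w' → Str w')
    (w : Word) (hl : w.length ≤ N + 1) (hg : Good w) (hbb : ¬ ([b,b] <:+: w))
    (hne : w ≠ []) : Str w := by
  obtain ⟨c, t, rfl⟩ : ∃ c t, w = c :: t := by
    cases w with
    | nil => exact absurd rfl hne
    | cons c t => exact ⟨c, t, rfl⟩
  obtain ⟨w₀, d, hw₀⟩ : ∃ w₀ d, (c :: t : Word) = w₀ ++ [d] := by
    rcases List.eq_nil_or_concat (c :: t) with h | ⟨w₀, d, h⟩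
    · simp at h
    · exact ⟨w₀, d, by rw [h, List.concat_eq_append]⟩
  cases c
  · cases d
    · -- starts a, ends a : the recursive case
      obtain ⟨m, hm⟩ := exists_desub (N+1) (a :: t) hl ⟨t, rfl⟩ hbb
      have hLm : L m = w₀ ++ [a] := by rw [← hm, hw₀]
      obtain ⟨m₀, rfl⟩ := last_L hLm
      have hwL : (a :: t : Word) = L m₀ ++ [a] := by rw [hm]; simp [bl]
      have balm : IsSturmian (m₀ ++ [a]) := by
        apply bal_La_iff.mp
        have e : L (m₀ ++ [a]) ++ [a] = (a :: t) ++ [a] := by rw [hwL]; simp [bl]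
        rw [e]
        exact hg.1
      have balm₀ : IsSturmian m₀ := bal_infix balm (List.prefix_append _ _).isInfix
      have balm₀b : IsSturmian (m₀ ++ [b]) := by
        by_contra hcon
        apply unbal_L_last_b hcon
        have e : L (m₀ ++ [b]) = (a :: t) ++ [b] := by rw [hwL]; simp [bl]
        rw [e]
        exact hg.2.1
      have balam : IsSturmian (a :: m₀) := by
        apply derive_am balm
        rw [← hwL]
        exact hg.2.2.1
      have balbm : IsSturmian (b :: m₀) := by
        apply derive_bm balm₀
        rw [← hwL]
        exact hg.2.2.2
      have hlen : m₀.length ≤ N := by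
        have h1 := length_L (m₀ ++ [a])
        have h2 : (L (m₀ ++ [a])).length = (a :: t).length := by
          rw [← hm]
        have h3 := hl
        simp [bl] at h1 h2 h3
        omega
      obtain ⟨u', x, y, n, hxy, hc', he⟩ := ih m₀ hlen ⟨balm, balm₀b, balam, balbm⟩
      refine ⟨L u' ++ [a], x, y, n, hxy, CentralR.exta hc', ?_⟩
      rw [hwL, show (L m₀ ++ [a] : Word) = L (m₀ ++ [a]) by simp [bl], he, lift_W hxy]
    · -- starts a, ends b : w = (ab)^n
      have haa : ¬ ([a,a] <:+: (a :: t)) := by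
        intro h
        apply hg.2.1
        refine ⟨[], ?_, ?_⟩
        · exact (by simpa using h : ([a] ++ [] ++ [a] : Word) <:+: (a :: t)).trans
            (List.prefix_append _ _).isInfix
        · refine ⟨w₀, [], ?_⟩
          rw [show ((a :: t) ++ [b] : Word) = (a :: t) ++ [b] from rfl, hw₀]
          simp
      obtain ⟨n, hn⟩ := alt_ab (N+1) (a :: t) hl haa hbb ⟨t, rfl⟩ ⟨w₀, hw₀⟩
      exact ⟨[], a, b, n, by simp, CentralR.nil, by rw [hn]; simp [W]⟩
  · cases d
    · -- starts b, ends a : reverse of alternating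
      have haa : ¬ ([a,a] <:+: (b :: t)) := by
        intro h
        apply hg.2.2.2
        refine ⟨[], ?_, ?_⟩
        · exact (by simpa using h : ([a] ++ [] ++ [a] : Word) <:+: (b :: t)).trans
            (List.suffix_cons b _).isInfix
        · exact ⟨[], t, by simp⟩
      obtain ⟨n, hn⟩ := alt_ab (N+1) (b :: t).reverse (by simpa using hl)
        (fun h => haa (by simpa using infix_reverse h))
        (fun h => hbb (by simpa using infix_reverse h))
        (by rw [hw₀]; exact ⟨w₀.reverse, by simp⟩)
        ⟨t.reverse, by simp⟩
      refine ⟨[], b, a, n, by simp, CentralR.nil, ?_⟩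
      have := congrArg List.reverse hn
      simp only [List.reverse_reverse] at this
      rw [this, reverse_P]
      simp [W]
    · -- starts b, ends b
      have haa : ¬ ([a,a] <:+: (b :: t)) := by
        intro h
        apply hg.2.2.2
        refine ⟨[], ?_, ?_⟩
        · exact (by simpa using h : ([a] ++ [] ++ [a] : Word) <:+: (b :: t)).trans
            (List.suffix_cons b _).isInfix
        · exact ⟨[], t, by simp⟩
      obtain ⟨n, hn⟩ := alt_ba_b (N+1) (b :: t) hl haa hbb ⟨t, rfl⟩ ⟨w₀, hw₀⟩
      refine ⟨P n [b,a] ++ [b], a, b, 0, by simp, central_bab n, ?_⟩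
      rw [hn]
      simp [W]

lemma Bthm : ∀ (N : ℕ) (w : Word), w.length ≤ N → Good w → Str w := by
  intro N
  induction N with
  | zero =>
    intro w hl _
    have : w = [] := List.length_eq_zero_iff.mp (Nat.le_antisymm hl (Nat.zero_le _))
    exact ⟨[], a, b, 0, by simp, CentralR.nil, by rw [this]; simp [W]⟩
  | succ N ih =>
    intro w hl hg
    by_cases hbb : ([b,b] <:+: w)
    · by_cases haa : ([a,a] <:+: w)
      · exfalso
        apply hg.1
        refine ⟨[], ?_, ?_⟩
        · exact (by simpa using haa : ([a] ++ [] ++ [a] : Word) <:+: w).trans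
            (List.prefix_append _ _).isInfix
        · exact (by simpa using hbb : ([b] ++ [] ++ [b] : Word) <:+: w).trans
            (List.prefix_append _ _).isInfix
      · apply Str_swW
        have hne : w ≠ [] := by
          intro h
          rw [h] at hbb
          simpa using hbb.length_le
        apply mainCase N ih (swW w) (by simpa [swW] using hl) (Good_swW hg)
        · intro h
          apply haa
          have h2 := infix_swW h
          simpa using h2
        · intro h
          apply hne
          cases w <;> simp_all [swW]
    · by_cases hne : w = []
      · exact ⟨[], a, b, 0, by simp, CentralR.nil, by rw [hne]; simp [W]⟩
      · exact mainCase N ih w hl hg hbb hne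

end Stu

namespace Stu

lemma two_cases {x y : AB} (hxy : x ≠ y) (c : AB) : c = x ∨ c = y := by
  cases c <;> cases x <;> cases y <;> simp_all

/-- all allowed two-sided extensions are balanced -/
lemma cor_allowed {v : Word} (h : CentralR v) {x y : AB} (hxy : x ≠ y) (n : ℕ)
    {c d : AB} (hcd : ¬ (c = x ∧ d = y)) : IsSturmian (c :: (W v x y n) ++ [d]) := by
  obtain ⟨hX, hY, hZ⟩ := S_of_central h x y hxy n
  rcases two_cases hxy c with rfl | rfl
  · rcases two_cases hxy d with rfl | rfl
    · exact hX
    · exact absurd ⟨rfl, rfl⟩ hcd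
  · rcases two_cases hxy d with rfl | rfl
    · exact hZ
    · exact hY

/-- any infix of any allowed extension is balanced; in particular of W itself -/
lemma bal_W_infix {v : Word} (h : CentralR v) {x y : AB} (hxy : x ≠ y) (n : ℕ)
    {t : Word} (ht : t <:+: W v x y n) : IsSturmian t := by
  apply bal_infix (cor_allowed h hxy n (c := y) (d := x) (by simp [hxy.symm]))
  exact ht.trans ((List.prefix_append _ _).isInfix.trans (List.suffix_cons y _).isInfix)

lemma cor_good {v : Word} (h : CentralR v) {x y : AB} (hxy : x ≠ y) (n : ℕ) :
    Good (W v x y n) := by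
  refine ⟨?_, ?_, ?_, ?_⟩
  · rcases two_cases hxy a with h1 | h1
    · apply bal_infix (cor_allowed h hxy n (c := y) (d := a) (by simp [hxy.symm]))
      rw [h1] at *
      exact (List.suffix_cons y _).isInfix
    · apply bal_infix (cor_allowed h hxy n (c := y) (d := a) (by simp [hxy.symm]))
      rw [h1] at *
      exact (List.suffix_cons y _).isInfix
  · apply bal_infix (cor_allowed h hxy n (c := y) (d := b) (by simp [hxy.symm]))
    exact (List.suffix_cons y _).isInfix
  · apply bal_infix (cor_allowed h hxy n (c := a) (d := x) (fun h2 => hxy (h2.2 ▸ rfl)))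
    refine List.IsPrefix.isInfix ?_
    exact List.cons_prefix_cons.mpr ⟨rfl, List.prefix_append _ _⟩
  · apply bal_infix (cor_allowed h hxy n (c := b) (d := x) (fun h2 => hxy (h2.2 ▸ rfl)))
    refine List.IsPrefix.isInfix ?_
    exact List.cons_prefix_cons.mpr ⟨rfl, List.prefix_append _ _⟩

/-- the bad extension x W y is unbalanced when n ≥ 1 -/
lemma unbal_xwy {v : Word} {x y : AB} (hxy : x ≠ y) {n : ℕ} (hn : 0 < n) :
    ¬ IsSturmian (x :: (W v x y n) ++ [y]) := by
  obtain ⟨m, rfl⟩ : ∃ m, n = m + 1 := ⟨n - 1, by omega⟩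
  have hxvx : ([x] ++ v ++ [x]) <:+: (x :: (W v x y (m+1)) ++ [y]) := by
    refine ⟨[], [y] ++ P m (v ++ [x,y]) ++ v ++ [y], ?_⟩
    simp [W]
  have hyvy : ([y] ++ v ++ [y]) <:+: (x :: (W v x y (m+1)) ++ [y]) := by
    refine ⟨[x] ++ P m (v ++ [x,y]) ++ v ++ [x], [], ?_⟩
    have e : W v x y (m+1) = P m (v ++ [x,y]) ++ v ++ [x,y] ++ v := by
      rw [W, P_succ']
      simp
    rw [e]
    simp
  intro hbal
  rcases pair_cases hxy with ⟨rfl, rfl⟩ | ⟨rfl, rfl⟩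
  · exact hbal ⟨v, hxvx, hyvy⟩
  · exact hbal ⟨v, hyvy, hxvx⟩

end Stu

namespace Stu

lemma isCentral_swW {w : Word} (h : IsCentral w) : IsCentral (swW w) := by
  rcases h with ⟨n, rfl⟩ | ⟨n, rfl⟩ | ⟨p, q, h1, h2⟩
  · right; left; exact ⟨n, by simp [swW, List.map_replicate]⟩
  · left; exact ⟨n, by simp [swW, List.map_replicate]⟩
  · right; right
    refine ⟨swW q, swW p, ?_, ?_⟩
    · rw [h2]; simp [swW]
    · rw [h1]; simp [swW]

lemma isCentral_exta {v' : Word} (ih : IsCentral v') : IsCentral (L v' ++ [a]) := by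
    rcases ih with ⟨n, rfl⟩ | ⟨n, rfl⟩ | ⟨p, q, h1, h2⟩
    · left
      refine ⟨n + 1, ?_⟩
      rw [L_repa, List.replicate_succ']
    · -- v = (ab)^n a
      rw [L_repb]
      cases n with
      | zero => left; exact ⟨1, rfl⟩
      | succ m =>
        right; right
        refine ⟨[], P m [a,b] ++ [a], ?_, ?_⟩
        · simp
        · rw [P_succ' m [a,b]]
          simp
    · right; right
      refine ⟨L p ++ [a], L q ++ [a], ?_, ?_⟩
      · rw [h1]; simp [bl]
      · rw [h2]; simp [bl]
lemma centralR_isCentral {v : Word} (h : CentralR v) : IsCentral v := by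
  induction h with
  | nil => left; exact ⟨0, rfl⟩
  | @exta v' hv' ih => exact isCentral_exta ih
  | @extb v' hv' ih => exact isCentral_swW (isCentral_exta (isCentral_swW ih))

end Stu

namespace Stu

lemma rep_of_shift : ∀ (p : Word) (c c' : AB), p ++ [c] = c' :: p →
    c' = c ∧ p = List.replicate p.length c := by
  intro p
  induction p with
  | nil =>
    intro c c' h
    simp at h
    exact ⟨h.symm, by simp⟩
  | cons d p' ih =>
    intro c c' h
    have h1 : d = c' := by
      have := congrArg List.head? h
      simpa using this
    subst h1
    have h2 : p' ++ [c] = d :: p' := by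
      have := congrArg List.tail h
      simpa using this
    obtain ⟨h3, h4⟩ := ih c d h2
    subst h3
    refine ⟨rfl, ?_⟩
    simp only [List.length_cons, List.replicate_succ]
    rw [← h4]

lemma pair_lt_aux (N : ℕ)
    (ihf : ∀ u' p' q' : Word, u'.length ≤ N → u' = p' ++ [a,b] ++ q' →
      u' = q' ++ [b,a] ++ p' → IsCentral p' ∧ IsCentral q')
    (u p q : Word) (hlen : u.length ≤ N + 1)
    (e1 : u = p ++ [a,b] ++ q) (e2 : u = q ++ [b,a] ++ p)
    (hlt : p.length < q.length) : IsCentral p ∧ IsCentral q := by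
  have hpu : p <+: u := ⟨[a,b] ++ q, by rw [e1]; simp⟩
  have hqu : q <+: u := ⟨[b,a] ++ p, by rw [e2]; simp⟩
  have hps : p <:+ u := ⟨q ++ [b,a], by rw [e2]⟩
  have hqs : q <:+ u := ⟨p ++ [a,b], by rw [e1]⟩
  by_cases hsmall : q.length ≤ p.length + 1
  · -- |q| = |p| + 1
    have hpq : p <+: q := List.prefix_of_prefix_length_le hpu hqu (Nat.le_of_lt hlt)
    obtain ⟨rr, hrr⟩ := hpq
    obtain ⟨c, rfl⟩ : ∃ c, rr = [c] := by
      apply List.length_eq_one_iff.mp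
      have := congrArg List.length hrr
      simp at this
      omega
    have hpq2 : p <:+ q := by
      have hps' : p.reverse <+: u.reverse := List.reverse_prefix.mpr hps
      have hqs' : q.reverse <+: u.reverse := List.reverse_prefix.mpr hqs
      have h5 : p.reverse <+: q.reverse :=
        List.prefix_of_prefix_length_le hps' hqs' (by simpa using Nat.le_of_lt hlt)
      exact List.reverse_prefix.mp h5
    obtain ⟨rr', hrr'⟩ := hpq2
    obtain ⟨c', rfl⟩ : ∃ c', rr' = [c'] := by
      apply List.length_eq_one_iff.mp
      have := congrArg List.length hrr'
      simp at this
      omega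
    have hshift : p ++ [c] = c' :: p := by
      rw [← hrr'] at hrr
      simpa using hrr
    obtain ⟨hcc, hrep⟩ := rep_of_shift p c c' hshift
    subst hcc
    have hc : c' = a := by
      have h3 : p ++ [a,b] ++ q = q ++ [b,a] ++ p := by rw [← e1, ← e2]
      rw [← hrr] at h3
      have h3' : p ++ ([a,b] ++ (p ++ [c'])) = p ++ ([c'] ++ ([b,a] ++ p)) := by
        simpa [List.append_assoc] using h3
      have h4 := List.append_cancel_left h3'
      have h5 := congrArg List.head? h4
      simpa using h5.symm
    subst hc
    constructor
    · left; exact ⟨p.length, hrep⟩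
    · left
      refine ⟨p.length + 1, ?_⟩
      rw [← hrr, hrep]
      simp [List.replicate_succ']
  · -- |q| ≥ |p| + 2
    push_neg at hsmall
    set r := p.length + 2 with hr
    have hrq : r ≤ q.length := hsmall
    have hdropu : List.drop r u = q := by
      rw [e1, show r = (p ++ [a,b]).length by simp [hr], List.drop_left]
    have A : q = List.drop r q ++ [b,a] ++ p := by
      conv_lhs => rw [← hdropu]
      rw [e2, List.drop_append_of_le_length (by simp; omega),
        List.drop_append_of_le_length hrq]
    have hq3p : List.drop r q <+: q := ⟨[b,a] ++ p, by rw [← List.append_assoc, ← A]⟩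
    have hXu : p ++ [a,b] ++ List.drop r q <+: u := by
      obtain ⟨z, hz⟩ := hq3p
      refine ⟨z, ?_⟩
      rw [e1, List.append_assoc (p ++ [a,b]) (List.drop r q) z, hz]
    have hlq : q.length = (p ++ [a,b] ++ List.drop r q).length := by
      have hA := congrArg List.length A
      simp at hA ⊢
      omega
    have B : q = p ++ [a,b] ++ List.drop r q :=
      (List.prefix_of_prefix_length_le hqu hXu (Nat.le_of_eq hlq)).eq_of_length hlq
    have hql : q.length ≤ N := by
      have := congrArg List.length e1
      simp at this
      omega
    constructor
    · exact (ihf q p (List.drop r q) hql B A).1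
    · right; right
      exact ⟨p, List.drop r q, B, A⟩

lemma pairfull : ∀ (N : ℕ) (u p q : Word), u.length ≤ N → u = p ++ [a,b] ++ q →
    u = q ++ [b,a] ++ p → IsCentral p ∧ IsCentral q := by
  intro N
  induction N with
  | zero =>
    intro u p q hl e1 _
    rw [e1] at hl
    simp at hl
  | succ N ih =>
    intro u p q hl e1 e2
    rcases lt_trichotomy p.length q.length with hlt | heq | hgt
    · exact pair_lt_aux N ih u p q hl e1 e2 hlt
    · exfalso
      have hpu : p <+: u := ⟨[a,b] ++ q, by rw [e1]; simp⟩
      have hqu : q <+: u := ⟨[b,a] ++ p, by rw [e2]; simp⟩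
      have hpq : p = q :=
        (List.prefix_of_prefix_length_le hpu hqu (Nat.le_of_eq heq)).eq_of_length heq
      subst hpq
      have h3' : p ++ ([a,b] ++ p) = p ++ ([b,a] ++ p) := by
        have := e1.symm.trans e2
        simpa [List.append_assoc] using this
      have h3 := List.append_cancel_left h3'
      simp at h3
    · have hd := pair_lt_aux N ih (swW u) (swW q) (swW p)
        (by simpa [swW] using hl)
        (by rw [e2]; simp [swW])
        (by rw [e1]; simp [swW])
        (by simpa [swW] using hgt)
      constructor
      · have := isCentral_swW hd.2
        simpa using this
      · have := isCentral_swW hd.1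
        simpa using this

end Stu

namespace Stu

lemma pref_pow {w v : Word} (h : w <+: v ++ w) : ∀ k : ℕ, w <+: P k v ++ w := by
  intro k
  induction k with
  | zero => simp
  | succ k ih =>
    have h2 : v ++ w <+: v ++ (P k v ++ w) := (List.prefix_append_right_inj v).mpr ih
    have h3 := h.trans h2
    rw [P_succ, List.append_assoc]
    exact h3

lemma length_P (n : ℕ) (s : Word) : (P n s).length = n * s.length := by
  induction n with
  | zero => simp
  | succ n ih => simp [ih, Nat.succ_mul]; ring

lemma pref_pow_self {w v : Word} (h : w <+: v ++ w) (hv : v ≠ []) : w <+: P w.length v := by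
  have h1 := pref_pow h w.length
  apply List.prefix_of_prefix_length_le h1 (List.prefix_append _ _)
  rw [length_P]
  have : 1 ≤ v.length := by
    cases v
    · simp at hv
    · simp
  calc w.length = w.length * 1 := by ring
  _ ≤ w.length * v.length := Nat.mul_le_mul_left _ this

lemma toCentralR : ∀ (N : ℕ) (u : Word), u.length ≤ N → IsCentral u → CentralR u := by
  intro N
  induction N with
  | zero =>
    intro u hl _
    have : u = [] := List.length_eq_zero_iff.mp (Nat.le_antisymm hl (Nat.zero_le _))
    rw [this]; exact CentralR.nil
  | succ N ih =>
    intro u hl hc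
    rcases hc with ⟨n, rfl⟩ | ⟨n, rfl⟩ | ⟨p, q, e1, e2⟩
    · exact CentralR.repa n
    · exact CentralR.repb n
    · have hlu := congrArg List.length e1
      simp at hlu
      obtain ⟨hcp, hcq⟩ := pairfull (N+1) u p q hl e1 e2
      have crp : CentralR p := ih p (by omega) hcp
      have crq : CentralR q := ih q (by omega) hcq
      have hab : (a : AB) ≠ b := by simp
      have hba : (b : AB) ≠ a := by simp
      have hqb : q ++ [b] <+: u := ⟨[a] ++ p, by rw [e2]; simp⟩
      have hpa : p ++ [a] <+: u := ⟨[b] ++ q, by rw [e1]; simp⟩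
      have h1 : u ++ [b] <+: (p ++ [a,b]) ++ (u ++ [b]) := by
        have e : u ++ [b] = (p ++ [a,b]) ++ (q ++ [b]) := by rw [e1]; simp
        conv_lhs => rw [e]
        exact (List.prefix_append_right_inj (p ++ [a,b])).mpr
          (hqb.trans (List.prefix_append u [b]))
      have h2 : u ++ [a] <+: (q ++ [b,a]) ++ (u ++ [a]) := by
        have e : u ++ [a] = (q ++ [b,a]) ++ (p ++ [a]) := by rw [e2]; simp
        conv_lhs => rw [e]
        exact (List.prefix_append_right_inj (q ++ [b,a])).mpr
          (hpa.trans (List.prefix_append u [a]))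
      have hb1 : u ++ [b] <+: P (u ++ [b]).length (p ++ [a,b]) :=
        pref_pow_self h1 (by simp)
      have ha1 : u ++ [a] <+: P (u ++ [a]).length (q ++ [b,a]) :=
        pref_pow_self h2 (by simp)
      have hM' : (u ++ [a]).length = (u ++ [b]).length := by simp
      rw [hM'] at ha1
      have hPW : P (u ++ [b]).length (p ++ [a,b]) <+: W p a b (u ++ [b]).length :=
        List.prefix_append _ _
      have hPW' : P (u ++ [b]).length (q ++ [b,a]) <+: W q b a (u ++ [b]).length :=
        List.prefix_append _ _
      have balub : IsSturmian (u ++ [b]) :=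
        bal_W_infix crp hab _ ((hb1.trans hPW).isInfix)
      have balua : IsSturmian (u ++ [a]) :=
        bal_W_infix crq hba _ ((ha1.trans hPW').isInfix)
      have balaub : IsSturmian (a :: (u ++ [b])) := by
        apply bal_infix (cor_allowed crp hab (u ++ [b]).length (c := a) (d := a) (by simp))
        apply List.IsPrefix.isInfix
        exact List.cons_prefix_cons.mpr ⟨rfl, (hb1.trans hPW).trans (List.prefix_append _ _)⟩
      have balbua : IsSturmian (b :: (u ++ [a])) := by
        apply bal_infix (cor_allowed crq hba (u ++ [b]).length (c := b) (d := b) (by simp))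
        apply List.IsPrefix.isInfix
        exact List.cons_prefix_cons.mpr ⟨rfl, (ha1.trans hPW').trans (List.prefix_append _ _)⟩
      have balbub : IsSturmian (b :: (u ++ [b])) := by
        obtain ⟨z, hz⟩ := hb1
        apply bal_infix (cor_allowed crp hab ((u ++ [b]).length + 1) (c := a) (d := a) (by simp))
        have hinf : (b :: (u ++ [b])) <:+: P ((u ++ [b]).length + 1) (p ++ [a,b]) := by
          refine ⟨p ++ [a], z, ?_⟩
          rw [P_succ, ← hz]
          simp
        apply hinf.trans
        refine List.IsInfix.trans ?_ ((List.prefix_append _ _).isInfix.trans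
          (List.suffix_cons a _).isInfix)
        exact (List.prefix_append _ _).isInfix
      have balaua : IsSturmian (a :: (u ++ [a])) := by
        obtain ⟨z, hz⟩ := ha1
        apply bal_infix (cor_allowed crq hba ((u ++ [b]).length + 1) (c := b) (d := b) (by simp))
        have hinf : (a :: (u ++ [a])) <:+: P ((u ++ [b]).length + 1) (q ++ [b,a]) := by
          refine ⟨q ++ [b], z, ?_⟩
          rw [P_succ, ← hz]
          simp
        apply hinf.trans
        refine List.IsInfix.trans ?_ ((List.prefix_append _ _).isInfix.trans
          (List.suffix_cons b _).isInfix)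
        exact (List.prefix_append _ _).isInfix
      have balau : IsSturmian (a :: u) :=
        bal_infix balaua (List.IsPrefix.isInfix (by simp))
      have balbu : IsSturmian (b :: u) :=
        bal_infix balbub (List.IsPrefix.isInfix (by simp))
      obtain ⟨u₀, x, y, n, hxy, hcr, he⟩ :=
        Bthm u.length u (Nat.le_refl _) ⟨balua, balub, balau, balbu⟩
      cases n with
      | zero =>
        have : u = u₀ := by simpa [W] using he
        rw [this]; exact hcr
      | succ m =>
        exfalso
        apply unbal_xwy hxy (Nat.succ_pos m) (v := u₀)
        rw [← he]
        rcases pair_cases hxy with ⟨rfl, rfl⟩ | ⟨rfl, rfl⟩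
        · exact balaub
        · exact balbua

end Stu


/-- `wa, wb, aw, bw` are all Sturmian iff `w = (uxy)^n u` for a central `u`,
distinct letters `x, y` and `n ≥ 0`; moreover all four bilateral extensions are Sturmian
iff `w` is central, and for `n > 0` exactly the extension `xwy` fails to be Sturmian. -/
theorem sturmian_bispecial_characterization (w : Word) :
    ((IsSturmian (w ++ [AB.a]) ∧ IsSturmian (w ++ [AB.b]) ∧
      IsSturmian (AB.a :: w) ∧ IsSturmian (AB.b :: w)) ↔
      ∃ (u : Word) (x y : AB) (n : ℕ), x ≠ y ∧ IsCentral u ∧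
        w = List.flatten (List.replicate n (u ++ [x, y])) ++ u) ∧
    ((IsSturmian (AB.a :: (w ++ [AB.a])) ∧ IsSturmian (AB.a :: (w ++ [AB.b])) ∧
      IsSturmian (AB.b :: (w ++ [AB.a])) ∧ IsSturmian (AB.b :: (w ++ [AB.b]))) ↔
      IsCentral w) ∧
    (∀ (u : Word) (x y : AB) (n : ℕ), x ≠ y → IsCentral u →
      w = List.flatten (List.replicate n (u ++ [x, y])) ++ u → 0 < n →
      ∀ c d : AB, (¬ IsSturmian (c :: (w ++ [d])) ↔ c = x ∧ d = y)) := by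

  open Stu in
  refine ⟨?_, ?_, ?_⟩
  · constructor
    · rintro ⟨h1, h2, h3, h4⟩
      obtain ⟨u, x, y, n, hxy, hcr, he⟩ :=
        Stu.Bthm w.length w (Nat.le_refl _) ⟨h1, h2, h3, h4⟩
      exact ⟨u, x, y, n, hxy, Stu.centralR_isCentral hcr, he⟩
    · rintro ⟨u, x, y, n, hxy, hcu, he⟩
      have hcr : Stu.CentralR u := Stu.toCentralR u.length u (Nat.le_refl _) hcu
      have hg := Stu.cor_good hcr hxy n
      rw [show Stu.W u x y n = List.flatten (List.replicate n (u ++ [x, y])) ++ u from rfl,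
        ← he] at hg
      exact ⟨hg.1, hg.2.1, hg.2.2.1, hg.2.2.2⟩
  · constructor
    · rintro ⟨h1, h2, h3, h4⟩
      have hg : Stu.Good w := by
        refine ⟨?_, ?_, ?_, ?_⟩
        · exact Stu.bal_infix h1 (List.suffix_cons _ _).isInfix
        · exact Stu.bal_infix h2 (List.suffix_cons _ _).isInfix
        · exact Stu.bal_infix h2 (List.IsPrefix.isInfix
            (List.cons_prefix_cons.mpr ⟨rfl, List.prefix_append _ _⟩))
        · exact Stu.bal_infix h4 (List.IsPrefix.isInfix
            (List.cons_prefix_cons.mpr ⟨rfl, List.prefix_append _ _⟩))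
      obtain ⟨u, x, y, n, hxy, hcr, he⟩ := Stu.Bthm w.length w (Nat.le_refl _) hg
      cases n with
      | zero =>
        have : w = u := by simpa [Stu.W] using he
        rw [this]
        exact Stu.centralR_isCentral hcr
      | succ m =>
        exfalso
        apply Stu.unbal_xwy hxy (Nat.succ_pos m) (v := u)
        rw [← he]
        rcases Stu.pair_cases hxy with ⟨rfl, rfl⟩ | ⟨rfl, rfl⟩
        · exact h2
        · exact h3
    · intro hcw
      have hcr : Stu.CentralR w := Stu.toCentralR w.length w (Nat.le_refl _) hcw
      have key : ∀ c d : AB, IsSturmian (c :: (w ++ [d])) := by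
        intro c d
        have hW0 : ∀ (x y : AB), Stu.W w x y 0 = w := by intro x y; simp [Stu.W]
        have hne : Stu.sw c ≠ c := by cases c <;> simp [Stu.sw]
        have := Stu.cor_allowed hcr hne 0 (c := c) (d := d)
          (fun h => by cases c <;> simp [Stu.sw] at h)
        rwa [hW0] at this
      exact ⟨key a a, key a b, key b a, key b b⟩
  · intro u x y n hxy hcu he hn c d
    have hcr : Stu.CentralR u := Stu.toCentralR u.length u (Nat.le_refl _) hcu
    constructor
    · intro hnb
      by_contra hcd
      apply hnb
      have := Stu.cor_allowed hcr hxy n (c := c) (d := d) hcd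
      rwa [show Stu.W u x y n = List.flatten (List.replicate n (u ++ [x, y])) ++ u from rfl,
        ← he] at this
    · rintro ⟨rfl, rfl⟩
      have := Stu.unbal_xwy hxy hn (v := u)
      rwa [show Stu.W u c d n = List.flatten (List.replicate n (u ++ [c, d])) ++ u from rfl,
        ← he] at this
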